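/- Let P be a symmetric positive definite n×n real matrix, R a symmetric positive definite m×m real matrix, and H an m×n real matrix, and let K* = P·Hᵀ·(H·P·Hᵀ + R)⁻¹ be the Kalman gain. Then the Fréchet derivative of the map K ↦ P_K (from n×m real matrices to n×n real matrices) at the point K* is the zero linear map; i.e., K* is a critical point of K ↦ P_K. -/

import Mathlib

open Matrix

/-- The posterior covariance matrix `P_K = (I - K·H)·P·(I - K·H)ᵀ + K·R·Kᵀ`. -/
noncomputable def postCov {n m : ℕ} (P : Matrix (Fin n) (Fin n) ℝ)
    (R : Matrix (Fin m) (Fin m) ℝ) (H : Matrix (Fin m) (Fin n) ℝ)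
    (K : Matrix (Fin n) (Fin m) ℝ) : Matrix (Fin n) (Fin n) ℝ :=
  (1 - K * H) * P * (1 - K * H)ᵀ + K * R * Kᵀ

/-- The Kalman gain `K* = P·Hᵀ·(H·P·Hᵀ + R)⁻¹`. -/
noncomputable def kalmanGain {n m : ℕ} (P : Matrix (Fin n) (Fin n) ℝ)
    (R : Matrix (Fin m) (Fin m) ℝ) (H : Matrix (Fin m) (Fin n) ℝ) :
    Matrix (Fin n) (Fin m) ℝ :=
  P * Hᵀ * (H * P * Hᵀ + R)⁻¹

attribute [local instance] Matrix.normedAddCommGroup Matrix.normedSpace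

/-!
With `S = H·P·Hᵀ + R`, the Kalman gain solves the normal equation `K*·S = P·Hᵀ`, and this lets one
complete the square: `P_K = (K - K*)·S·(K - K*)ᵀ + P_{K*}`. The first term is a bilinear
expression in `K - K*`, which vanishes at `K*` together with its derivative.
-/

theorem ContinuousLinearMap.hasFDerivAt_of_bilinear_of_eq_zero {𝕜 E F G G' : Type*}
    [NontriviallyNormedField 𝕜] [NormedAddCommGroup E] [NormedSpace 𝕜 E]
    [NormedAddCommGroup F] [NormedSpace 𝕜 F] [NormedAddCommGroup G] [NormedSpace 𝕜 G]
    [NormedAddCommGroup G'] [NormedSpace 𝕜 G'] (B : E →L[𝕜] F →L[𝕜] G)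
    {f : G' → E} {g : G' → F} {f' : G' →L[𝕜] E} {g' : G' →L[𝕜] F} {x : G'}
    (hf : HasFDerivAt f f' x) (hg : HasFDerivAt g g' x) (hfx : f x = 0) (hgx : g x = 0) :
    HasFDerivAt (fun y => B (f y) (g y)) (0 : G' →L[𝕜] G) x := by
  simpa [hfx, hgx] using B.hasFDerivAt_of_bilinear hf hg

namespace Matrix

variable {𝕜 ι κ : Type*} [NontriviallyNormedField 𝕜] [CompleteSpace 𝕜] [Fintype ι] [Fintype κ]

noncomputable def mulMulTransposeCLM (S : Matrix κ κ 𝕜) :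
    Matrix ι κ 𝕜 →L[𝕜] Matrix ι κ 𝕜 →L[𝕜] Matrix ι ι 𝕜 :=
  LinearMap.toContinuousLinearMap <| LinearMap.toContinuousLinearMap.toLinearMap ∘ₗ
    LinearMap.mk₂ 𝕜 (fun X Y => X * S * Yᵀ) (fun _ _ _ => by simp [Matrix.add_mul])
      (fun _ _ _ => by simp) (fun _ _ _ => by simp [Matrix.mul_add]) (fun _ _ _ => by simp)

@[simp]
theorem mulMulTransposeCLM_apply (S : Matrix κ κ 𝕜) (X Y : Matrix ι κ 𝕜) :
    mulMulTransposeCLM S X Y = X * S * Yᵀ := rfl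

theorem hasFDerivAt_sub_mul_mul_transpose_sub (S : Matrix κ κ 𝕜) (K₀ : Matrix ι κ 𝕜) :
    HasFDerivAt (fun K => (K - K₀) * S * (K - K₀)ᵀ) (0 : Matrix ι κ 𝕜 →L[𝕜] Matrix ι ι 𝕜) K₀ := by
  have hK : HasFDerivAt (fun K => K - K₀) (ContinuousLinearMap.id 𝕜 (Matrix ι κ 𝕜)) K₀ :=
    (hasFDerivAt_id K₀).sub_const K₀
  exact (mulMulTransposeCLM S).hasFDerivAt_of_bilinear_of_eq_zero hK hK (sub_self K₀) (sub_self K₀)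

end Matrix

section KalmanGain

variable {n m : ℕ} {P : Matrix (Fin n) (Fin n) ℝ} {R : Matrix (Fin m) (Fin m) ℝ}
  {H : Matrix (Fin m) (Fin n) ℝ}

theorem postCov_eq_sub_sub_add (K : Matrix (Fin n) (Fin m) ℝ) :
    postCov P R H K = P - K * (H * P) - P * Hᵀ * Kᵀ + K * (H * P * Hᵀ + R) * Kᵀ := by
  simp only [postCov, Matrix.sub_mul, Matrix.mul_sub, Matrix.mul_add, Matrix.add_mul,
    transpose_sub, transpose_mul, transpose_one, Matrix.one_mul, Matrix.mul_one,
    Matrix.mul_assoc]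
  abel

theorem postCov_eq_add_postCov_of_mul_eq (hP : P.IsSymm) (hR : R.IsSymm)
    {K₀ : Matrix (Fin n) (Fin m) ℝ} (hK₀ : K₀ * (H * P * Hᵀ + R) = P * Hᵀ)
    (K : Matrix (Fin n) (Fin m) ℝ) :
    postCov P R H K = (K - K₀) * (H * P * Hᵀ + R) * (K - K₀)ᵀ + postCov P R H K₀ := by
  rw [postCov_eq_sub_sub_add, postCov_eq_sub_sub_add]
  set S := H * P * Hᵀ + R
  have hS : Sᵀ = S := by simp [S, hP.eq, hR.eq, Matrix.mul_assoc]
  have hHP : H * P = S * K₀ᵀ := by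
    rw [← hS, ← transpose_mul, hK₀, transpose_mul, hP.eq, transpose_transpose]
  rw [hHP, ← hK₀]
  simp only [Matrix.sub_mul, Matrix.mul_sub, transpose_sub, Matrix.mul_assoc]
  abel

theorem kalmanGain_mul (hS : IsUnit (H * P * Hᵀ + R).det) :
    kalmanGain P R H * (H * P * Hᵀ + R) = P * Hᵀ :=
  nonsing_inv_mul_cancel_right _ _ hS

end KalmanGain

theorem fderiv_postCov_kalmanGain {n m : ℕ} (P : Matrix (Fin n) (Fin n) ℝ)
    (R : Matrix (Fin m) (Fin m) ℝ) (H : Matrix (Fin m) (Fin n) ℝ)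
    (hP : P.PosDef) (hR : R.PosDef) :
    fderiv ℝ (fun K : Matrix (Fin n) (Fin m) ℝ => postCov P R H K)
      (kalmanGain P R H) = 0 := by
  have hS : (H * P * Hᵀ + R).PosDef := by
    simpa using PosDef.posSemidef_add (hP.posSemidef.mul_mul_conjTranspose_same H) hR
  have hK := kalmanGain_mul ((isUnit_iff_isUnit_det _).mp hS.isUnit)
  have hsq := postCov_eq_add_postCov_of_mul_eq (isHermitian_iff_isSymm.mp hP.isHermitian)
    (isHermitian_iff_isSymm.mp hR.isHermitian) hK
  show fderiv ℝ (postCov P R H) _ = 0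
  rw [funext hsq]
  exact ((hasFDerivAt_sub_mul_mul_transpose_sub _ _).add_const _).fderiv
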